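/- arXiv:2411.06629 — 6 statements merged into one kernel-verified Lean document; each statement's English description precedes it below -/
import Mathlib

section
/- Let D₊, D₋ ∈ ℝᴺˣᴺ and H diagonal positive definite satisfy H D₋ + (H D₊)ᵀ = B with B = e_N e_Nᵀ − e₁ e₁ᵀ. Define the penalized operators D̃± = D± + H⁻¹ B_N with B_N = (1/2)(e₁e₁ᵀ − e₁e_Nᵀ + e_Ne₁ᵀ − e_Ne_Nᵀ). Then ⟨D̃₊ f, g⟩_H + ⟨f, D̃₋ g⟩_H = 0 for all f, g ∈ ℝᴺ. -/
/-!
The form `⟨D̃₊ f, g⟩_H + ⟨f, D̃₋ g⟩_H` is `fᵀ (D̃₊ᵀ H + H D̃₋) g`. Since `H` is symmetric and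
invertible, penalizing both operators by `H⁻¹ B_N` adds `B_N + B_Nᵀ = e₁e₁ᵀ - e_Ne_Nᵀ = -B`
to `D₊ᵀ H + H D₋ = B`.
-/

open Matrix

variable {n K : Type*}

lemma Matrix.mulVec_dotProduct_mulVec_add_dotProduct_mulVec_mulVec [Fintype n] [CommSemiring K]
    (A B H : Matrix n n K) (f g : n → K) :
    (A *ᵥ f) ⬝ᵥ (H *ᵥ g) + f ⬝ᵥ (H *ᵥ (B *ᵥ g)) = f ⬝ᵥ ((Aᵀ * H + H * B) *ᵥ g) := by
  rw [add_mulVec, dotProduct_add, mulVec_mulVec, dotProduct_mulVec (A *ᵥ f), vecMul_mulVec,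
    ← dotProduct_mulVec, ← mulVec_mulVec]

lemma Matrix.penalized_transpose_mul_add_mul [Fintype n] [DecidableEq n] [CommRing K]
    (H Dp Dm C : Matrix n n K) (hH : IsUnit H.det) (hHt : Hᵀ = H) :
    (Dp + H⁻¹ * C)ᵀ * H + H * (Dm + H⁻¹ * C) = Dpᵀ * H + H * Dm + (Cᵀ + C) := by
  have hHinvt : (H⁻¹)ᵀ = H⁻¹ := by rw [transpose_nonsing_inv, hHt]
  rw [transpose_add, transpose_mul, hHinvt, add_mul, mul_add, Matrix.mul_assoc Cᵀ,
    nonsing_inv_mul _ hH, Matrix.mul_one, ← Matrix.mul_assoc H, mul_nonsing_inv _ hH,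
    Matrix.one_mul]
  abel

lemma Matrix.transpose_add_self_periodicPenalty [DecidableEq n] [Field K] [CharZero K] (i j : n) :
    ((1 / 2 : K) • (single i i (1 : K) - single i j 1 + single j i 1 - single j j 1))ᵀ
      + (1 / 2 : K) • (single i i (1 : K) - single i j 1 + single j i 1 - single j j 1)
      = single i i 1 - single j j 1 := by
  simp only [transpose_smul, transpose_sub, transpose_add, transpose_single]
  module

theorem dp_sbp_penalized_periodic_general (N : ℕ)
    (Dp Dm : Matrix (Fin N) (Fin N) ℝ) (w : Fin N → ℝ) (hw : ∀ i, 0 < w i)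
    (i1 iN : Fin N)
    (hsbp : Matrix.diagonal w * Dm + (Matrix.diagonal w * Dp)ᵀ
      = Matrix.single iN iN (1 : ℝ) - Matrix.single i1 i1 (1 : ℝ))
    (BN : Matrix (Fin N) (Fin N) ℝ)
    (hBN : BN = ((1 : ℝ) / 2) •
      (Matrix.single i1 i1 (1 : ℝ) - Matrix.single i1 iN (1 : ℝ)
        + Matrix.single iN i1 (1 : ℝ) - Matrix.single iN iN (1 : ℝ)))
    (Dpt Dmt : Matrix (Fin N) (Fin N) ℝ)
    (hDpt : Dpt = Dp + (Matrix.diagonal w)⁻¹ * BN)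
    (hDmt : Dmt = Dm + (Matrix.diagonal w)⁻¹ * BN) :
    ∀ f g : Fin N → ℝ,
      (Dpt.mulVec f) ⬝ᵥ ((Matrix.diagonal w).mulVec g)
        + f ⬝ᵥ ((Matrix.diagonal w).mulVec (Dmt.mulVec g)) = 0 := by
  intro f g
  have hdet : IsUnit (diagonal w).det := by
    rw [det_diagonal]
    exact (Finset.prod_pos fun i _ => hw i).ne'.isUnit
  have hboundary : Dpᵀ * diagonal w + diagonal w * Dm = single iN iN 1 - single i1 i1 1 := by
    rw [← hsbp, transpose_mul, diagonal_transpose, add_comm]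
  rw [mulVec_dotProduct_mulVec_add_dotProduct_mulVec_mulVec, hDpt, hDmt,
    penalized_transpose_mul_add_mul _ _ _ _ hdet (diagonal_transpose w), hboundary, hBN,
    transpose_add_self_periodicPenalty, sub_add_sub_cancel, sub_self, zero_mulVec,
    dotProduct_zero]

/-- Periodic penalization: the penalized operators `D̃± = D± + H⁻¹ B_N` satisfy
the exact skew-adjoint (periodic SBP) relation `⟨D̃₊f, g⟩_H + ⟨f, D̃₋g⟩_H = 0`. -/
theorem dp_sbp_penalized_periodic (N : ℕ)
    (Dp Dm : Matrix (Fin N) (Fin N) ℝ) (w : Fin N → ℝ) (hw : ∀ i, 0 < w i)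
    (i1 iN : Fin N) (hN : 0 < N) (hi1 : (i1 : ℕ) = 0) (hiN : (iN : ℕ) = N - 1)
    (hsbp : Matrix.diagonal w * Dm + (Matrix.diagonal w * Dp)ᵀ
      = Matrix.single iN iN (1 : ℝ) - Matrix.single i1 i1 (1 : ℝ))
    (BN : Matrix (Fin N) (Fin N) ℝ)
    (hBN : BN = ((1 : ℝ) / 2) •
      (Matrix.single i1 i1 (1 : ℝ) - Matrix.single i1 iN (1 : ℝ)
        + Matrix.single iN i1 (1 : ℝ) - Matrix.single iN iN (1 : ℝ)))
    (Dpt Dmt : Matrix (Fin N) (Fin N) ℝ)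
    (hDpt : Dpt = Dp + (Matrix.diagonal w)⁻¹ * BN)
    (hDmt : Dmt = Dm + (Matrix.diagonal w)⁻¹ * BN) :
    ∀ f g : Fin N → ℝ,
      (Dpt.mulVec f) ⬝ᵥ ((Matrix.diagonal w).mulVec g)
        + f ⬝ᵥ ((Matrix.diagonal w).mulVec (Dmt.mulVec g)) = 0 :=
  dp_sbp_penalized_periodic_general N Dp Dm w hw i1 iN hsbp BN hBN Dpt Dmt hDpt hDmt
end

section
/- Consider the semi-discrete Burgers scheme ∂ₜu = −(1/3)u∘(Du) − (1/3)D(u²) + (γ/2)(D₊−D₋)u, where D = (D₊+D₋)/2, H is diagonal positive definite, ⟨D₊f,g⟩_H + ⟨f,D₋g⟩_H = 0 for all f,g, ⟨f,(D₊−D₋)f⟩_H ≤ 0 for all f, and γ ≥ 0. Then the discrete entropy E_h = (1/2)⟨u,u⟩_H satisfies dE_h/dt = (γ/2)⟨u,(D₊−D₋)u⟩_H ≤ 0 along solutions. -/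
/-!
Write `⟨f, g⟩ = ∑ wᵢ fᵢ gᵢ` and `D = (D₊ + D₋)/2`. Adding the dual-pairing identity to its
transpose shows that `D` is skew-adjoint for `⟨·,·⟩`. Hence the two halves of the skew-symmetric
split form of the Burgers flux cancel: `⟨u, u∘Du⟩ = ⟨u², Du⟩ = -⟨D(u²), u⟩`. Testing the scheme
with `u` therefore leaves only the upwind term `(γ/2)⟨u, (D₊ - D₋)u⟩`, which is `≤ 0`.
-/

open Matrix

variable {ι : Type*} [Fintype ι]

def wInner (w f g : ι → ℝ) : ℝ := ∑ i, w i * f i * g i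

theorem wInner_comm (w f g : ι → ℝ) : wInner w f g = wInner w g f := by
  simp only [wInner, mul_right_comm]

theorem hasDerivAt_half_wInner_self {u : ℝ → ι → ℝ} {u' : ι → ℝ} {t : ℝ}
    (hu : HasDerivAt u u' t) (w : ι → ℝ) :
    HasDerivAt (fun s => (1 / 2) * wInner w (u s) (u s)) (wInner w (u t) u') t := by
  have hsum : HasDerivAt (fun s => wInner w (u s) (u s))
      (∑ i, w i * (u' i * u t i + u t i * u' i)) t :=
    HasDerivAt.fun_sum fun i _ => by
      simpa only [mul_assoc] using
        ((hasDerivAt_pi.mp hu i).fun_mul (hasDerivAt_pi.mp hu i)).const_mul (w i)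
  refine (hsum.const_mul (1 / 2)).congr_deriv ?_
  simp only [wInner, Finset.mul_sum]
  exact Finset.sum_congr rfl fun i _ => by ring

theorem wInner_average_mulVec_skew {w : ι → ℝ} {Dp Dm : Matrix ι ι ℝ}
    (hsbp : ∀ f g, wInner w (Dp *ᵥ f) g + wInner w f (Dm *ᵥ g) = 0) (f g : ι → ℝ) :
    wInner w ((((1 : ℝ) / 2) • (Dp + Dm)) *ᵥ f) g
      + wInner w f ((((1 : ℝ) / 2) • (Dp + Dm)) *ᵥ g) = 0 := by
  have hgf := hsbp g f
  rw [wInner_comm w _ f, wInner_comm w g] at hgf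
  calc _ = (1 / 2) * ((wInner w (Dp *ᵥ f) g + wInner w f (Dm *ᵥ g))
        + (wInner w f (Dp *ᵥ g) + wInner w (Dm *ᵥ f) g)) := by
        simp only [wInner, smul_mulVec, add_mulVec, Pi.smul_apply, Pi.add_apply, smul_eq_mul,
          Finset.mul_sum, ← Finset.sum_add_distrib]
        exact Finset.sum_congr rfl fun i _ => by ring
    _ = 0 := by rw [hsbp, hgf]; norm_num

theorem wInner_burgersFlux_eq_zero {w : ι → ℝ} {D : Matrix ι ι ℝ}
    (hskew : ∀ f g, wInner w (D *ᵥ f) g + wInner w f (D *ᵥ g) = 0) (v : ι → ℝ) :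
    wInner w v (fun i => v i * (D *ᵥ v) i) + wInner w v (D *ᵥ fun j => v j * v j) = 0 := by
  have hsquare :
      wInner w v (fun i => v i * (D *ᵥ v) i) = wInner w (fun j => v j * v j) (D *ᵥ v) :=
    Finset.sum_congr rfl fun i _ => by ring
  rw [hsquare, wInner_comm w v, add_comm]
  exact hskew _ v

theorem wInner_self_burgers_rhs {w : ι → ℝ} {D A : Matrix ι ι ℝ}
    (hskew : ∀ f g, wInner w (D *ᵥ f) g + wInner w f (D *ᵥ g) = 0) (γ : ℝ) (v : ι → ℝ) :
    wInner w v (fun i => -(1 / 3) * v i * (D *ᵥ v) i - (1 / 3) * (D *ᵥ fun j => v j * v j) i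
        + (γ / 2) * (A *ᵥ v) i)
      = (γ / 2) * wInner w v (A *ᵥ v) := by
  have hflux := wInner_burgersFlux_eq_zero hskew v
  calc _ = -(1 / 3) * (wInner w v (fun i => v i * (D *ᵥ v) i)
          + wInner w v (D *ᵥ fun j => v j * v j)) + (γ / 2) * wInner w v (A *ᵥ v) := by
        simp only [wInner, Finset.mul_sum, ← Finset.sum_add_distrib]
        exact Finset.sum_congr rfl fun i _ => by ring
    _ = (γ / 2) * wInner w v (A *ᵥ v) := by rw [hflux]; ring

theorem semidiscrete_burgers_entropy_stable_general (N : ℕ)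
    (Dp Dm : Matrix (Fin N) (Fin N) ℝ) (w : Fin N → ℝ)
    (γ : ℝ) (hγ : 0 ≤ γ)
    (hsbp : ∀ f g : Fin N → ℝ,
      (∑ i, w i * (Dp.mulVec f) i * g i) + (∑ i, w i * f i * (Dm.mulVec g) i) = 0)
    (hupwind : ∀ f : Fin N → ℝ, (∑ i, w i * f i * ((Dp - Dm).mulVec f) i) ≤ 0)
    (u : ℝ → Fin N → ℝ)
    (hode : ∀ t, HasDerivAt u
      (fun i => -(1 / 3) * u t i * ((((1 : ℝ) / 2) • (Dp + Dm)).mulVec (u t)) i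
        - (1 / 3) * ((((1 : ℝ) / 2) • (Dp + Dm)).mulVec (fun j => u t j * u t j)) i
        + (γ / 2) * ((Dp - Dm).mulVec (u t)) i) t) :
    ∀ t, HasDerivAt (fun s => (1 / 2) * ∑ i, w i * u s i * u s i)
        ((γ / 2) * ∑ i, w i * u t i * ((Dp - Dm).mulVec (u t)) i) t
      ∧ (γ / 2) * (∑ i, w i * u t i * ((Dp - Dm).mulVec (u t)) i) ≤ 0 := by
  intro t
  have hskew := wInner_average_mulVec_skew (w := w) hsbp
  exact ⟨(hasDerivAt_half_wInner_self (hode t) w).congr_deriv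
      (wInner_self_burgers_rhs hskew γ (u t)),
    mul_nonpos_of_nonneg_of_nonpos (div_nonneg hγ zero_le_two) (hupwind (u t))⟩

/-- Entropy stability of the semi-discrete Burgers scheme: along solutions of
`∂ₜu = −(1/3)u∘(Du) − (1/3)D(u²) + (γ/2)(D₊−D₋)u` with `D = (D₊+D₋)/2`,
the discrete entropy `E_h = (1/2)⟨u,u⟩_H` satisfies
`dE_h/dt = (γ/2)⟨u,(D₊−D₋)u⟩_H ≤ 0`. -/
theorem semidiscrete_burgers_entropy_stable (N : ℕ)
    (Dp Dm : Matrix (Fin N) (Fin N) ℝ) (w : Fin N → ℝ) (hw : ∀ i, 0 < w i)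
    (γ : ℝ) (hγ : 0 ≤ γ)
    (hsbp : ∀ f g : Fin N → ℝ,
      (∑ i, w i * (Dp.mulVec f) i * g i) + (∑ i, w i * f i * (Dm.mulVec g) i) = 0)
    (hupwind : ∀ f : Fin N → ℝ, (∑ i, w i * f i * ((Dp - Dm).mulVec f) i) ≤ 0)
    (u : ℝ → Fin N → ℝ)
    (hode : ∀ t, HasDerivAt u
      (fun i => -(1 / 3) * u t i * ((((1 : ℝ) / 2) • (Dp + Dm)).mulVec (u t)) i
        - (1 / 3) * ((((1 : ℝ) / 2) • (Dp + Dm)).mulVec (fun j => u t j * u t j)) i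
        + (γ / 2) * ((Dp - Dm).mulVec (u t)) i) t) :
    ∀ t, HasDerivAt (fun s => (1 / 2) * ∑ i, w i * u s i * u s i)
        ((γ / 2) * ∑ i, w i * u t i * ((Dp - Dm).mulVec (u t)) i) t
      ∧ (γ / 2) * (∑ i, w i * u t i * ((Dp - Dm).mulVec (u t)) i) ≤ 0 :=
  semidiscrete_burgers_entropy_stable_general N Dp Dm w γ hγ hsbp hupwind u hode
end

section
/- Under the same periodic dual-pairing SBP assumptions (⟨D₊f,g⟩_H + ⟨f,D₋g⟩_H = 0 for all f,g), the semi-discrete Burgers scheme ∂ₜu = −(1/3)u∘(Du) − (1/3)D(u²) + (γ/2)(D₊−D₋)u conserves the total discrete mass: d/dt ⟨𝟙, u⟩_H = 0, where 𝟙 = (1,…,1)ᵀ. -/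
/-!
Testing the SBP identity `⟨D₊f, g⟩_H + ⟨f, D₋g⟩_H = 0` against the constant `𝟙` and using
`D±𝟙 = 0` shows that the `H`-mass of `D₊f` and of `D₋g` vanishes, which disposes of the
conservative flux `D(u²)` and of the dissipation `(D₊ - D₋)u`. Testing it with `f = g = u`
shows `⟨u, (D₊ + D₋)u⟩_H = 0`, which disposes of the skew-symmetric part `u ∘ Du`.
-/

open Matrix

section SBP

variable {ι : Type*} [Fintype ι] {Dp Dm : Matrix ι ι ℝ} {w : ι → ℝ}

theorem sum_weight_mul_mulVec_left_eq_zero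
    (hsbp : ∀ f g : ι → ℝ, (∑ i, w i * (Dp *ᵥ f) i * g i) + (∑ i, w i * f i * (Dm *ᵥ g) i) = 0)
    (hDm1 : Dm *ᵥ (fun _ => (1 : ℝ)) = 0) (f : ι → ℝ) :
    ∑ i, w i * (Dp *ᵥ f) i = 0 := by
  simpa [hDm1] using hsbp f (fun _ => 1)

theorem sum_weight_mul_mulVec_right_eq_zero
    (hsbp : ∀ f g : ι → ℝ, (∑ i, w i * (Dp *ᵥ f) i * g i) + (∑ i, w i * f i * (Dm *ᵥ g) i) = 0)
    (hDp1 : Dp *ᵥ (fun _ => (1 : ℝ)) = 0) (g : ι → ℝ) :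
    ∑ i, w i * (Dm *ᵥ g) i = 0 := by
  simpa [hDp1] using hsbp (fun _ => 1) g

theorem sum_weight_mul_mulVec_add_mulVec_self_eq_zero
    (hsbp : ∀ f g : ι → ℝ, (∑ i, w i * (Dp *ᵥ f) i * g i) + (∑ i, w i * f i * (Dm *ᵥ g) i) = 0)
    (u : ι → ℝ) :
    ∑ i, w i * u i * ((Dp *ᵥ u) i + (Dm *ᵥ u) i) = 0 := by
  rw [← hsbp u u, ← Finset.sum_add_distrib]
  exact Finset.sum_congr rfl fun i _ => by ring

end SBP

noncomputable def burgersRhs {ι : Type*} [Fintype ι] (Dp Dm : Matrix ι ι ℝ) (γ : ℝ) (u : ι → ℝ) : ι → ℝ :=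
  fun i => -(1 / 3) * u i * ((((1 : ℝ) / 2) • (Dp + Dm)) *ᵥ u) i
    - (1 / 3) * ((((1 : ℝ) / 2) • (Dp + Dm)) *ᵥ (fun j => u j * u j)) i
    + (γ / 2) * ((Dp - Dm) *ᵥ u) i

theorem sum_weight_mul_burgersRhs_eq_zero {ι : Type*} [Fintype ι] {Dp Dm : Matrix ι ι ℝ}
    {w : ι → ℝ}
    (hsbp : ∀ f g : ι → ℝ, (∑ i, w i * (Dp *ᵥ f) i * g i) + (∑ i, w i * f i * (Dm *ᵥ g) i) = 0)
    (hDp1 : Dp *ᵥ (fun _ => (1 : ℝ)) = 0) (hDm1 : Dm *ᵥ (fun _ => (1 : ℝ)) = 0)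
    (γ : ℝ) (u : ι → ℝ) :
    ∑ i, w i * burgersRhs Dp Dm γ u i = 0 := by
  have hsplit : ∑ i, w i * burgersRhs Dp Dm γ u i =
      -(1 / 6) * ∑ i, w i * u i * ((Dp *ᵥ u) i + (Dm *ᵥ u) i)
      - (1 / 6) * ∑ i, w i * (Dp *ᵥ (fun j => u j * u j)) i
      - (1 / 6) * ∑ i, w i * (Dm *ᵥ (fun j => u j * u j)) i
      + (γ / 2) * ∑ i, w i * (Dp *ᵥ u) i
      - (γ / 2) * ∑ i, w i * (Dm *ᵥ u) i := by
    simp only [Finset.mul_sum, ← Finset.sum_add_distrib, ← Finset.sum_sub_distrib]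
    refine Finset.sum_congr rfl fun i _ => ?_
    simp only [burgersRhs, smul_mulVec, add_mulVec, sub_mulVec, Pi.add_apply, Pi.sub_apply,
      Pi.smul_apply, smul_eq_mul]
    ring
  rw [hsplit, sum_weight_mul_mulVec_add_mulVec_self_eq_zero hsbp,
    sum_weight_mul_mulVec_left_eq_zero hsbp hDm1, sum_weight_mul_mulVec_right_eq_zero hsbp hDp1,
    sum_weight_mul_mulVec_left_eq_zero hsbp hDm1, sum_weight_mul_mulVec_right_eq_zero hsbp hDp1]
  ring

theorem HasDerivAt.sum_mul_apply {ι : Type*} [Fintype ι] {u : ℝ → ι → ℝ} {u' : ι → ℝ} {t : ℝ}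
    (hu : HasDerivAt u u' t) (c : ι → ℝ) :
    HasDerivAt (fun s => ∑ i, c i * u s i) (∑ i, c i * u' i) t :=
  HasDerivAt.fun_sum fun i _ => (hasDerivAt_pi.mp hu i).const_mul (c i)

theorem semidiscrete_burgers_mass_conservation_general (N : ℕ)
    (Dp Dm : Matrix (Fin N) (Fin N) ℝ) (w : Fin N → ℝ)
    (γ : ℝ)
    (hsbp : ∀ f g : Fin N → ℝ,
      (∑ i, w i * (Dp.mulVec f) i * g i) + (∑ i, w i * f i * (Dm.mulVec g) i) = 0)
    (hDp1 : Dp.mulVec (fun _ => (1 : ℝ)) = 0)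
    (hDm1 : Dm.mulVec (fun _ => (1 : ℝ)) = 0)
    (u : ℝ → Fin N → ℝ)
    (hode : ∀ t, HasDerivAt u
      (fun i => -(1 / 3) * u t i * ((((1 : ℝ) / 2) • (Dp + Dm)).mulVec (u t)) i
        - (1 / 3) * ((((1 : ℝ) / 2) • (Dp + Dm)).mulVec (fun j => u t j * u t j)) i
        + (γ / 2) * ((Dp - Dm).mulVec (u t)) i) t) :
    ∀ t, HasDerivAt (fun s => ∑ i, w i * (1 : ℝ) * u s i) 0 t := by
  intro t
  have hrhs : HasDerivAt u (burgersRhs Dp Dm γ (u t)) t := hode t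
  have hmass : ∑ i, w i * 1 * burgersRhs Dp Dm γ (u t) i = 0 := by
    simpa only [mul_one] using sum_weight_mul_burgersRhs_eq_zero hsbp hDp1 hDm1 γ (u t)
  simpa only [hmass] using hrhs.sum_mul_apply (fun i => w i * 1)

/-- Discrete mass conservation for the semi-discrete Burgers scheme:
`d/dt ⟨𝟙, u⟩_H = 0` along solutions, given the periodic dual-pairing SBP
property and exactness on constants `D±𝟙 = 0`. -/
theorem semidiscrete_burgers_mass_conservation (N : ℕ)
    (Dp Dm : Matrix (Fin N) (Fin N) ℝ) (w : Fin N → ℝ) (hw : ∀ i, 0 < w i)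
    (γ : ℝ) (hγ : 0 ≤ γ)
    (hsbp : ∀ f g : Fin N → ℝ,
      (∑ i, w i * (Dp.mulVec f) i * g i) + (∑ i, w i * f i * (Dm.mulVec g) i) = 0)
    (hDp1 : Dp.mulVec (fun _ => (1 : ℝ)) = 0)
    (hDm1 : Dm.mulVec (fun _ => (1 : ℝ)) = 0)
    (u : ℝ → Fin N → ℝ)
    (hode : ∀ t, HasDerivAt u
      (fun i => -(1 / 3) * u t i * ((((1 : ℝ) / 2) • (Dp + Dm)).mulVec (u t)) i
        - (1 / 3) * ((((1 : ℝ) / 2) • (Dp + Dm)).mulVec (fun j => u t j * u t j)) i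
        + (γ / 2) * ((Dp - Dm).mulVec (u t)) i) t) :
    ∀ t, HasDerivAt (fun s => ∑ i, w i * (1 : ℝ) * u s i) 0 t :=
  semidiscrete_burgers_mass_conservation_general N Dp Dm w γ hsbp hDp1 hDm1 u hode
end

section
/- Let h, u ∈ ℝᴺ (grid functions) and D satisfy the periodic SBP property ⟨Df,g⟩_H + ⟨f,Dg⟩_H = 0 with H diagonal positive definite. Then ⟨g h, D(h∘u)⟩_H + ⟨u∘h, D(g h)⟩_H + (1/2)⟨u, D(h∘u∘u)⟩_H + (1/2)⟨h∘u∘u, Du⟩_H = 0, where ∘ is componentwise multiplication and g is a scalar constant. -/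
/-- The key discrete cancellation for the skew-symmetric shallow water flux:
`⟨gh, D(h∘u)⟩_H + ⟨u∘h, D(gh)⟩_H + (1/2)⟨u, D(h∘u∘u)⟩_H + (1/2)⟨h∘u∘u, Du⟩_H = 0`. -/
theorem discrete_swe_entropy_cancellation (N : ℕ)
    (D : Matrix (Fin N) (Fin N) ℝ) (w : Fin N → ℝ) (hw : ∀ i, 0 < w i)
    (hsbp : ∀ f g : Fin N → ℝ,
      (∑ i, w i * (D.mulVec f) i * g i) + (∑ i, w i * f i * (D.mulVec g) i) = 0)
    (g : ℝ) (h u : Fin N → ℝ) :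
    (∑ i, w i * (g * h i) * (D.mulVec (fun j => h j * u j)) i)
      + (∑ i, w i * (u i * h i) * (D.mulVec (fun j => g * h j)) i)
      + (1 / 2) * (∑ i, w i * u i * (D.mulVec (fun j => h j * u j * u j)) i)
      + (1 / 2) * (∑ i, w i * (h i * u i * u i) * (D.mulVec u) i) = 0 := by
  have h1 := hsbp (fun j => g * h j) (fun j => h j * u j)
  have h2 := hsbp (fun j => h j * u j * u j) u
  have e1 : (∑ i, w i * (u i * h i) * (D.mulVec (fun j => g * h j)) i)
      = ∑ i, w i * (D.mulVec (fun j => g * h j)) i * (h i * u i) :=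
    Finset.sum_congr rfl (fun i _ => by ring)
  have e2 : (∑ i, w i * u i * (D.mulVec (fun j => h j * u j * u j)) i)
      = ∑ i, w i * (D.mulVec (fun j => h j * u j * u j)) i * u i :=
    Finset.sum_congr rfl (fun i _ => by ring)
  rw [e1, e2]
  linarith [h1, h2]
end

section
/- Consider the semi-discrete skew-symmetric shallow water momentum equation ∂ₜ(h∘u) = −(1/2)D(h∘u∘u) − (1/2)u∘D(h∘u) − (1/2)(h∘u)∘(Du) − g h∘(Dh) − (γ₂/2)(D₋−D₊)(g h − (1/2)u∘u), with D = (D₊+D₋)/2 satisfying the periodic dual-pairing SBP property and D±𝟙 = 0. Then total momentum is conserved: d/dt ⟨𝟙, h∘u⟩_H = 0. -/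
/-! Pairing the momentum equation with `𝟙` kills every term. The two conservative terms
`D(h∘u∘u)` and `(D₋ - D₊)(g h - u∘u/2)` sum to zero because
`⟨D₊f, 𝟙⟩_H = -⟨f, D₋𝟙⟩_H = 0`, and likewise for `D₋`. The remaining terms pair into
`⟨u, D(h∘u)⟩_H + ⟨Du, h∘u⟩_H` and `⟨h, Dh⟩_H`, which vanish because the periodic SBP property
makes the central operator `D = (D₊ + D₋)/2` skew-adjoint for `⟨·,·⟩_H`. -/

open Matrix

variable {ι : Type*} [Fintype ι]

theorem hasDerivAt_sum_mul {F : ℝ → ι → ℝ} {F' : ι → ℝ} {t : ℝ} (c : ι → ℝ)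
    (hF : HasDerivAt F F' t) : HasDerivAt (fun s => ∑ i, c i * F s i) (∑ i, c i * F' i) t :=
  HasDerivAt.fun_sum fun i _ => (hasDerivAt_pi.1 hF i).const_mul (c i)

def IsPeriodicSBP (w : ι → ℝ) (Dp Dm : Matrix ι ι ℝ) : Prop :=
  ∀ f q : ι → ℝ, (∑ i, w i * (Dp *ᵥ f) i * q i) + (∑ i, w i * f i * (Dm *ᵥ q) i) = 0

noncomputable def swMomentumRate (Dp Dm : Matrix ι ι ℝ) (g γ2 : ℝ) (h u : ι → ℝ) : ι → ℝ :=
  fun i =>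
  -(1 / 2) * ((((1 : ℝ) / 2) • (Dp + Dm)) *ᵥ (fun j => h j * u j * u j)) i
  - (1 / 2) * u i * ((((1 : ℝ) / 2) • (Dp + Dm)) *ᵥ (fun j => h j * u j)) i
  - (1 / 2) * (h i * u i) * ((((1 : ℝ) / 2) • (Dp + Dm)) *ᵥ u) i
  - g * h i * ((((1 : ℝ) / 2) • (Dp + Dm)) *ᵥ h) i
  - (γ2 / 2) * ((Dm - Dp) *ᵥ (fun j => g * h j - (1 / 2) * u j * u j)) i

namespace IsPeriodicSBP

variable {w : ι → ℝ} {Dp Dm : Matrix ι ι ℝ}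

theorem sum_mul_mulVec_plus_eq_zero (hD : IsPeriodicSBP w Dp Dm)
    (hDm1 : Dm *ᵥ (fun _ => 1) = 0) (f : ι → ℝ) : ∑ i, w i * (Dp *ᵥ f) i = 0 := by
  simpa [hDm1] using hD f (fun _ => 1)

theorem sum_mul_mulVec_minus_eq_zero (hD : IsPeriodicSBP w Dp Dm)
    (hDp1 : Dp *ᵥ (fun _ => 1) = 0) (f : ι → ℝ) : ∑ i, w i * (Dm *ᵥ f) i = 0 := by
  simpa [hDp1] using hD (fun _ => 1) f

theorem sum_mul_mulVec_smul_add_eq_zero (hD : IsPeriodicSBP w Dp Dm)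
    (hDp1 : Dp *ᵥ (fun _ => 1) = 0) (hDm1 : Dm *ᵥ (fun _ => 1) = 0) (c : ℝ) (f : ι → ℝ) :
    ∑ i, w i * ((c • (Dp + Dm)) *ᵥ f) i = 0 := by
  simp only [smul_mulVec, add_mulVec, Pi.smul_apply, Pi.add_apply, smul_eq_mul, mul_add,
    mul_left_comm (w _) c, ← Finset.mul_sum, Finset.sum_add_distrib,
    hD.sum_mul_mulVec_plus_eq_zero hDm1, hD.sum_mul_mulVec_minus_eq_zero hDp1, mul_zero, add_zero]

theorem sum_mul_mulVec_sub_eq_zero (hD : IsPeriodicSBP w Dp Dm)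
    (hDp1 : Dp *ᵥ (fun _ => 1) = 0) (hDm1 : Dm *ᵥ (fun _ => 1) = 0) (f : ι → ℝ) :
    ∑ i, w i * ((Dm - Dp) *ᵥ f) i = 0 := by
  simp only [sub_mulVec, Pi.sub_apply, mul_sub, Finset.sum_sub_distrib,
    hD.sum_mul_mulVec_plus_eq_zero hDm1, hD.sum_mul_mulVec_minus_eq_zero hDp1, sub_zero]

theorem skewAdjoint_smul_add (hD : IsPeriodicSBP w Dp Dm) (c : ℝ) (f q : ι → ℝ) :
    (∑ i, w i * ((c • (Dp + Dm)) *ᵥ f) i * q i) + ∑ i, w i * f i * ((c • (Dp + Dm)) *ᵥ q) i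
      = 0 := by
  have hpoint : ∀ i, w i * ((c • (Dp + Dm)) *ᵥ f) i * q i + w i * f i * ((c • (Dp + Dm)) *ᵥ q) i
      = c * ((w i * (Dp *ᵥ f) i * q i + w i * f i * (Dm *ᵥ q) i)
        + (w i * (Dp *ᵥ q) i * f i + w i * q i * (Dm *ᵥ f) i)) := fun i => by
    simp only [smul_mulVec, add_mulVec, Pi.smul_apply, Pi.add_apply, smul_eq_mul]
    ring
  rw [← Finset.sum_add_distrib, Finset.sum_congr rfl fun i _ => hpoint i, ← Finset.mul_sum]
  simp only [Finset.sum_add_distrib]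
  linear_combination c * (hD f q + hD q f)

theorem sum_mul_swMomentumRate_eq_zero (hD : IsPeriodicSBP w Dp Dm)
    (hDp1 : Dp *ᵥ (fun _ => 1) = 0) (hDm1 : Dm *ᵥ (fun _ => 1) = 0) (g γ2 : ℝ) (h u : ι → ℝ) :
    ∑ i, w i * swMomentumRate Dp Dm g γ2 h u i = 0 := by
  set D := ((1 : ℝ) / 2) • (Dp + Dm)
  set hu : ι → ℝ := fun j => h j * u j
  set huu : ι → ℝ := fun j => h j * u j * u j
  set E : ι → ℝ := fun j => g * h j - (1 / 2) * u j * u j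
  have hpoint : ∀ i, w i * swMomentumRate Dp Dm g γ2 h u i
      = -(1 / 2) * (w i * (D *ᵥ huu) i)
        - (1 / 2) * (w i * (D *ᵥ u) i * hu i + w i * u i * (D *ᵥ hu) i)
        - (g / 2) * (w i * (D *ᵥ h) i * h i + w i * h i * (D *ᵥ h) i)
        - (γ2 / 2) * (w i * ((Dm - Dp) *ᵥ E) i) := fun i => by
    simp only [swMomentumRate, D, hu, huu, E]
    ring
  rw [Finset.sum_congr rfl fun i _ => hpoint i]
  simp only [Finset.sum_sub_distrib, Finset.sum_add_distrib, ← Finset.mul_sum]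
  linear_combination -(1 / 2) * hD.sum_mul_mulVec_smul_add_eq_zero hDp1 hDm1 (1 / 2) huu
    - (1 / 2) * hD.skewAdjoint_smul_add (1 / 2) u hu
    - (g / 2) * hD.skewAdjoint_smul_add (1 / 2) h h
    - (γ2 / 2) * hD.sum_mul_mulVec_sub_eq_zero hDp1 hDm1 E

end IsPeriodicSBP

theorem semidiscrete_swe_momentum_conservation_general (N : ℕ)
    (Dp Dm : Matrix (Fin N) (Fin N) ℝ) (w : Fin N → ℝ)
    (g γ2 : ℝ)
    (hsbp : ∀ f q : Fin N → ℝ,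
      (∑ i, w i * (Dp.mulVec f) i * q i) + (∑ i, w i * f i * (Dm.mulVec q) i) = 0)
    (hDp1 : Dp.mulVec (fun _ => (1 : ℝ)) = 0)
    (hDm1 : Dm.mulVec (fun _ => (1 : ℝ)) = 0)
    (h u : ℝ → Fin N → ℝ)
    (hode : ∀ t, HasDerivAt (fun s => fun i => h s i * u s i)
      (fun i =>
        -(1 / 2) * ((((1 : ℝ) / 2) • (Dp + Dm)).mulVec (fun j => h t j * u t j * u t j)) i
        - (1 / 2) * u t i * ((((1 : ℝ) / 2) • (Dp + Dm)).mulVec (fun j => h t j * u t j)) i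
        - (1 / 2) * (h t i * u t i) * ((((1 : ℝ) / 2) • (Dp + Dm)).mulVec (u t)) i
        - g * h t i * ((((1 : ℝ) / 2) • (Dp + Dm)).mulVec (h t)) i
        - (γ2 / 2) * ((Dm - Dp).mulVec (fun j => g * h t j - (1 / 2) * u t j * u t j)) i) t) :
    ∀ t, HasDerivAt (fun s => ∑ i, w i * (1 : ℝ) * (h s i * u s i)) 0 t := by
  intro t
  have hmomentum : HasDerivAt (fun s => ∑ i, w i * 1 * (h s i * u s i))
      (∑ i, w i * 1 * swMomentumRate Dp Dm g γ2 (h t) (u t) i) t :=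
    hasDerivAt_sum_mul _ (hode t)
  simpa only [mul_one, IsPeriodicSBP.sum_mul_swMomentumRate_eq_zero hsbp hDp1 hDm1] using hmomentum

/-- Discrete momentum conservation for the semi-discrete skew-symmetric
shallow water momentum equation: `d/dt ⟨𝟙, h∘u⟩_H = 0`. -/
theorem semidiscrete_swe_momentum_conservation (N : ℕ)
    (Dp Dm : Matrix (Fin N) (Fin N) ℝ) (w : Fin N → ℝ) (hw : ∀ i, 0 < w i)
    (g γ2 : ℝ) (hg : 0 < g) (hγ2 : 0 ≤ γ2)
    (hsbp : ∀ f q : Fin N → ℝ,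
      (∑ i, w i * (Dp.mulVec f) i * q i) + (∑ i, w i * f i * (Dm.mulVec q) i) = 0)
    (hDp1 : Dp.mulVec (fun _ => (1 : ℝ)) = 0)
    (hDm1 : Dm.mulVec (fun _ => (1 : ℝ)) = 0)
    (h u : ℝ → Fin N → ℝ)
    (hode : ∀ t, HasDerivAt (fun s => fun i => h s i * u s i)
      (fun i =>
        -(1 / 2) * ((((1 : ℝ) / 2) • (Dp + Dm)).mulVec (fun j => h t j * u t j * u t j)) i
        - (1 / 2) * u t i * ((((1 : ℝ) / 2) • (Dp + Dm)).mulVec (fun j => h t j * u t j)) i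
        - (1 / 2) * (h t i * u t i) * ((((1 : ℝ) / 2) • (Dp + Dm)).mulVec (u t)) i
        - g * h t i * ((((1 : ℝ) / 2) • (Dp + Dm)).mulVec (h t)) i
        - (γ2 / 2) * ((Dm - Dp).mulVec (fun j => g * h t j - (1 / 2) * u t j * u t j)) i) t) :
    ∀ t, HasDerivAt (fun s => ∑ i, w i * (1 : ℝ) * (h s i * u s i)) 0 t :=
  semidiscrete_swe_momentum_conservation_general N Dp Dm w g γ2 hsbp hDp1 hDm1 h u hode
end

section
/- Let A ∈ ℝᴺˣᴺ be symmetric with xᵀAx ≤ 0 for all x, and let H be diagonal positive definite with Q₋ + Q₊ᵀ = 0 where Q± = HD±. Then for the linear system ∂ₜu = −(A_x ⊗ D)u + (1/2)(Γ ⊗ (D₊−D₋))u with A_x ∈ ℝᵐˣᵐ symmetric constant, D = (D₊+D₋)/2, and Γ = γ I_m with γ ≥ 0, the discrete energy ‖u‖²_{I_m⊗H} is non-increasing along solutions: d/dt ‖u‖²_{I⊗H} = γ Σᵢ ⟨uᵢ, (D₊−D₋)uᵢ⟩_H ≤ 0. -/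
/-!
Since `H` is symmetric, the energy `Σᵢ ⟨uᵢ, H uᵢ⟩` has derivative `2 Σᵢ ⟨uᵢ, H u̇ᵢ⟩`.
The dual-pairing relation `Q₋ + Q₊ᵀ = 0` makes `HD = (Q₊ + Q₋)/2` skew-symmetric, and
a symmetric `A_x` tensored with a skew-symmetric matrix is again skew-symmetric, so the
central-difference part of the scheme contributes nothing. What remains is the
upwind dissipation `γ Σᵢ ⟨uᵢ, H(D₊ − D₋)uᵢ⟩`, which is non-positive.
-/

open Matrix

section Calculus

variable {𝕜 n : Type*} [NontriviallyNormedField 𝕜] [Fintype n]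
  {f g : 𝕜 → n → 𝕜} {f' g' : n → 𝕜} {t : 𝕜}

theorem HasDerivAt.dotProduct (hf : HasDerivAt f f' t) (hg : HasDerivAt g g' t) :
    HasDerivAt (fun s => f s ⬝ᵥ g s) (f' ⬝ᵥ g t + f t ⬝ᵥ g') t := by
  have h := HasDerivAt.fun_sum (u := Finset.univ) fun k _ =>
    (hasDerivAt_pi.1 hf k).fun_mul (hasDerivAt_pi.1 hg k)
  simpa only [_root_.dotProduct, Finset.sum_add_distrib] using h

theorem HasDerivAt.matrix_mulVec {m : Type*} [Fintype m] (M : Matrix m n 𝕜)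
    (hf : HasDerivAt f f' t) : HasDerivAt (fun s => M *ᵥ f s) (M *ᵥ f') t :=
  hasDerivAt_pi.2 fun i => by
    simpa only [mulVec, _root_.dotProduct] using HasDerivAt.fun_sum (u := Finset.univ) fun j _ =>
      (hasDerivAt_pi.1 hf j).const_mul (M i j)

theorem hasDerivAt_sum_dotProduct_mulVec_self {ι : Type*} [Fintype ι] {H : Matrix n n 𝕜}
    (hH : H.IsSymm) {u : 𝕜 → ι → n → 𝕜} {u' : ι → n → 𝕜} (hu : HasDerivAt u u' t) :
    HasDerivAt (fun s => ∑ i, u s i ⬝ᵥ H *ᵥ u s i) (2 * ∑ i, u t i ⬝ᵥ H *ᵥ u' i) t := by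
  have h := HasDerivAt.fun_sum (u := Finset.univ) fun i _ =>
    (hasDerivAt_pi.1 hu i).dotProduct ((hasDerivAt_pi.1 hu i).matrix_mulVec H)
  refine h.congr_deriv ?_
  rw [Finset.mul_sum]
  refine Finset.sum_congr rfl fun i _ => ?_
  rw [← dotProduct_transpose_mulVec, hH.eq, two_mul]

end Calculus

section SkewSymmetric

variable {R n : Type*}

theorem transpose_add_eq_neg_of_add_transpose_eq_zero [AddCommGroup R]
    {Qp Qm : Matrix n n R} (h : Qm + Qpᵀ = 0) : (Qp + Qm)ᵀ = -(Qp + Qm) := by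
  have hT : Qmᵀ + Qp = 0 := by simpa using congrArg transpose h
  rw [transpose_add, neg_add]
  linear_combination (norm := abel) h + hT

theorem sum_dotProduct_mulVec_sum_smul_eq_zero {ι : Type*} [Fintype ι] [Fintype n] [CommRing R]
    [IsAddTorsionFree R] {Q : Matrix n n R} (hQ : Qᵀ = -Q) {C : Matrix ι ι R}
    (hC : C.IsSymm) (v : ι → n → R) :
    ∑ i, v i ⬝ᵥ Q *ᵥ ∑ j, C i j • v j = 0 := by
  have expand : ∑ i, v i ⬝ᵥ Q *ᵥ ∑ j, C i j • v j = ∑ i, ∑ j, C i j * (v i ⬝ᵥ Q *ᵥ v j) := by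
    simp only [mulVec_sum, mulVec_smul, dotProduct_sum, dotProduct_smul, smul_eq_mul]
  -- exchanging `i` and `j` turns the double sum into its negative
  rw [← self_eq_neg, expand, ← Finset.sum_neg_distrib]
  conv_lhs => rw [Finset.sum_comm]
  refine Finset.sum_congr rfl fun i _ => ?_
  rw [← Finset.sum_neg_distrib]
  refine Finset.sum_congr rfl fun j _ => ?_
  rw [hC.apply, ← dotProduct_transpose_mulVec, hQ, neg_mulVec, dotProduct_neg, mul_neg]

end SkewSymmetric

theorem semidiscrete_linear_energy_stable_general (N m : ℕ)
    (Dp Dm H A : Matrix (Fin N) (Fin N) ℝ)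
    (hHdiag : ∀ i j, i ≠ j → H i j = 0)
    (hperiodic : H * Dm + (H * Dp)ᵀ = 0)
    (hAdef : A = H * (Dp - Dm))
    (hAneg : ∀ x : Fin N → ℝ, x ⬝ᵥ A.mulVec x ≤ 0)
    (Ax : Matrix (Fin m) (Fin m) ℝ) (hAx : Axᵀ = Ax)
    (γ : ℝ) (hγ : 0 ≤ γ)
    (u : ℝ → Fin m → Fin N → ℝ)
    (hode : ∀ t, HasDerivAt u
      (fun i => -(∑ j, Ax i j • ((((1 : ℝ) / 2) • (Dp + Dm)).mulVec (u t j)))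
        + (γ / 2) • ((Dp - Dm).mulVec (u t i))) t) :
    ∀ t, HasDerivAt (fun s => ∑ i, (u s i) ⬝ᵥ (H.mulVec (u s i)))
        (γ * ∑ i, (u t i) ⬝ᵥ (H.mulVec ((Dp - Dm).mulVec (u t i)))) t
      ∧ γ * (∑ i, (u t i) ⬝ᵥ (H.mulVec ((Dp - Dm).mulVec (u t i)))) ≤ 0 := by
  intro t
  have hH : H.IsSymm := IsDiag.isSymm fun i j => hHdiag i j
  have hskew : (H * (((1 : ℝ) / 2) • (Dp + Dm)))ᵀ = -(H * (((1 : ℝ) / 2) • (Dp + Dm))) := by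
    rw [Matrix.mul_smul, transpose_smul, Matrix.mul_add,
      transpose_add_eq_neg_of_add_transpose_eq_zero hperiodic, smul_neg]
  have hcentral : ∑ i, u t i ⬝ᵥ H *ᵥ ∑ j, Ax i j • (((1 : ℝ) / 2) • (Dp + Dm)) *ᵥ u t j = 0 := by
    simpa only [mulVec_mulVec, mulVec_sum, mulVec_smul] using
      sum_dotProduct_mulVec_sum_smul_eq_zero hskew hAx (u t)
  refine ⟨(hasDerivAt_sum_dotProduct_mulVec_self hH (hode t)).congr_deriv ?_, ?_⟩
  · simp only [mulVec_add, mulVec_neg, dotProduct_add, dotProduct_neg, Finset.sum_add_distrib,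
      Finset.sum_neg_distrib, hcentral, mulVec_smul, dotProduct_smul, smul_eq_mul,
      ← Finset.mul_sum]
    ring
  · refine mul_nonpos_of_nonneg_of_nonpos hγ (Finset.sum_nonpos fun i _ => ?_)
    rw [mulVec_mulVec, ← hAdef]
    exact hAneg (u t i)

/-- Linear energy stability of the upwind dual-pairing SBP scheme for a symmetric
linear system: the discrete energy `‖u‖²_{I⊗H}` is non-increasing, with
`d/dt ‖u‖²_{I⊗H} = γ Σᵢ ⟨uᵢ, (D₊−D₋)uᵢ⟩_H ≤ 0`. -/
theorem semidiscrete_linear_energy_stable (N m : ℕ)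
    (Dp Dm H A : Matrix (Fin N) (Fin N) ℝ)
    (hHdiag : ∀ i j, i ≠ j → H i j = 0) (hHpos : ∀ i, 0 < H i i)
    (hperiodic : H * Dm + (H * Dp)ᵀ = 0)
    (hAdef : A = H * (Dp - Dm))
    (hAsym : Aᵀ = A)
    (hAneg : ∀ x : Fin N → ℝ, x ⬝ᵥ A.mulVec x ≤ 0)
    (Ax : Matrix (Fin m) (Fin m) ℝ) (hAx : Axᵀ = Ax)
    (γ : ℝ) (hγ : 0 ≤ γ)
    (u : ℝ → Fin m → Fin N → ℝ)
    (hode : ∀ t, HasDerivAt u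
      (fun i => -(∑ j, Ax i j • ((((1 : ℝ) / 2) • (Dp + Dm)).mulVec (u t j)))
        + (γ / 2) • ((Dp - Dm).mulVec (u t i))) t) :
    ∀ t, HasDerivAt (fun s => ∑ i, (u s i) ⬝ᵥ (H.mulVec (u s i)))
        (γ * ∑ i, (u t i) ⬝ᵥ (H.mulVec ((Dp - Dm).mulVec (u t i)))) t
      ∧ γ * (∑ i, (u t i) ⬝ᵥ (H.mulVec ((Dp - Dm).mulVec (u t i)))) ≤ 0 :=
  semidiscrete_linear_energy_stable_general N m Dp Dm H A hHdiag hperiodic hAdef hAneg Ax hAx γ hγ u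
    hode
end
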